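/- Let q be a prime power and V, W finite-dimensional F_q-vector spaces. For f : L(V,W) → ℂ, the junta-degree of f (the minimal d such that f is a sum of functions each depending only on the values Av₁,...,Av_i, A*u_{i+1},...,A*u_d for some fixed vectors v_j ∈ V and functionals u_j ∈ W*) equals the Fourier-degree of f, defined as max{rank(X) : f̂(X) ≠ 0}. -/

import Mathlib

/-!
Fourier inversion writes `f` as the sum of the terms `f̂(X) u_X`, and since `Tr(XA) = Tr(AX)`
the character `u_X` depends on `A` only through its values on a basis of `range X`; hence the
junta-degree is at most the Fourier-degree.

Conversely, Fourier coefficients are additive in `f`, so it suffices to treat a single junta `g`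
determined by the `A v_l` and the `A* u_l`. It is invariant under translation by every `Δ` that
kills the `v_l` and is killed by the `u_l`, so `ĝ(X) ≠ 0` forces `u_X(Δ) = 1` for all such `Δ`,
hence `Tr(XΔ) = 0` by non-degeneracy of the trace of `𝔽_q / 𝔽_p`. Taking `Δ = ψ ⊗ w` with
`ψ ⊥ v_l` and `w ∈ ⋂ ker u_l` shows that `X` maps `⋂ ker u_l` into `span v_l`, and a dimension
count gives `rank X ≤ i + (d - i)`.
-/

open LinearMap Module

noncomputable def ee (p : ℕ) (a : ZMod p) : ℂ :=
  Complex.exp (2 * (Real.pi : ℂ) * Complex.I * (a.val : ℂ) / (p : ℂ))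

/-- The character `u_X(A) = ω^{τ(Tr(XA))}` on `L(V,W)`. -/
noncomputable def uX (p s : ℕ) [Fact p.Prime] {V W : Type*}
    [AddCommGroup V] [Module (GaloisField p s) V]
    [AddCommGroup W] [Module (GaloisField p s) W]
    (X : W →ₗ[GaloisField p s] V) (A : V →ₗ[GaloisField p s] W) : ℂ :=
  ee p (Algebra.trace (ZMod p) (GaloisField p s)
    (LinearMap.trace (GaloisField p s) V (X ∘ₗ A)))

/-- Fourier coefficient of `f : L(V,W) → ℂ` at `X ∈ L(W,V)` (uniform measure). -/
noncomputable def fhatB (p s : ℕ) [Fact p.Prime] {V W : Type*}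
    [AddCommGroup V] [Module (GaloisField p s) V]
    [AddCommGroup W] [Module (GaloisField p s) W]
    (f : (V →ₗ[GaloisField p s] W) → ℂ) (X : W →ₗ[GaloisField p s] V) : ℂ :=
  (∑ᶠ A : V →ₗ[GaloisField p s] W, f A * (starRingEnd ℂ) (uX p s X A)) /
    (Nat.card (V →ₗ[GaloisField p s] W) : ℂ)

instance {R M N : Type*} [Semiring R] [AddCommMonoid M] [Module R M] [AddCommMonoid N]
    [Module R N] [Finite M] [Finite N] : Finite (M →ₗ[R] N) :=
  Finite.of_injective _ DFunLike.coe_injective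

lemma ee_eq_stdAddChar {p : ℕ} [NeZero p] (a : ZMod p) : ee p a = ZMod.stdAddChar a := by
  rw [ee, ZMod.stdAddChar_apply, ZMod.toCircle_apply]

lemma exists_algebraTrace_mul_ne_zero {K L : Type*} [Field K] [Field L] [Algebra K L]
    [FiniteDimensional K L] [Algebra.IsSeparable K L] {a : L} (ha : a ≠ 0) :
    ∃ b : L, Algebra.trace K L (a * b) ≠ 0 := by
  by_contra! h
  exact ha ((traceForm_nondegenerate K L).1 a fun b => by simpa using h b)

section LinearAlgebra

variable {K V W : Type*} [Field K] [AddCommGroup V] [Module K V] [AddCommGroup W] [Module K W]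

-- `u l ∘ₗ A` is `A* (u l)`, the dual map applied to `u l`.
def IsJuntaOn {α ι κ : Type*} (v : ι → V) (u : κ → Dual K W) (g : (V →ₗ[K] W) → α) : Prop :=
  ∀ A B : V →ₗ[K] W, (∀ l, A (v l) = B (v l)) → (∀ l, u l ∘ₗ A = u l ∘ₗ B) → g A = g B

lemma IsJuntaOn.apply_add_eq {α ι κ : Type*} {v : ι → V} {u : κ → Dual K W}
    {g : (V →ₗ[K] W) → α} (hg : IsJuntaOn v u g) {Δ : V →ₗ[K] W} (hv : ∀ l, Δ (v l) = 0)
    (hu : ∀ l, u l ∘ₗ Δ = 0) (A : V →ₗ[K] W) : g (A + Δ) = g A :=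
  hg _ _ (fun l => by simp [hv l]) (fun l => by rw [comp_add, hu l, add_zero])

lemma finrank_le_finrank_iInf_ker_add_card [FiniteDimensional K W] {κ : Type*} [Fintype κ]
    (u : κ → Dual K W) :
    finrank K W ≤ finrank K (⨅ l, ker (u l) : Submodule K W) + Fintype.card κ := by
  have hrank := (LinearMap.pi u).finrank_range_add_finrank_ker
  have hrange := Submodule.finrank_le (range (LinearMap.pi u))
  rw [ker_pi] at hrank
  rw [finrank_fintype_fun_eq_card] at hrange
  omega

lemma finrank_range_add_finrank_le_of_le_comap [FiniteDimensional K V] [FiniteDimensional K W]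
    {X : W →ₗ[K] V} {W₀ : Submodule K W} {V₀ : Submodule K V} (h : W₀ ≤ V₀.comap X) :
    finrank K (range X) + finrank K W₀ ≤ finrank K V₀ + finrank K W := by
  obtain ⟨W₁, hW₁⟩ := W₀.exists_isCompl
  have hrange : range X ≤ V₀ ⊔ W₁.map X := by
    rw [← Submodule.map_top, ← hW₁.sup_eq_top, Submodule.map_sup]
    exact sup_le_sup_right (Submodule.map_le_iff_le_comap.2 h) _
  calc finrank K (range X) + finrank K W₀
      ≤ finrank K V₀ + finrank K W₁ + finrank K W₀ := by
        gcongr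
        calc finrank K (range X) ≤ finrank K (V₀ ⊔ W₁.map X : Submodule K V) :=
              Submodule.finrank_mono hrange
          _ ≤ finrank K V₀ + finrank K (W₁.map X) :=
              Submodule.finrank_add_le_finrank_add_finrank _ _
          _ ≤ finrank K V₀ + finrank K W₁ := by gcongr; exact Submodule.finrank_map_le _ _
    _ = finrank K V₀ + finrank K W := by
        rw [add_assoc, add_comm (finrank K W₁), Submodule.finrank_add_eq_of_isCompl hW₁]

lemma le_comap_of_trace_comp_smulRight_eq_zero [FiniteDimensional K V] {X : W →ₗ[K] V}
    {W₀ : Submodule K W} {V₀ : Submodule K V}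
    (h : ∀ w ∈ W₀, ∀ ψ ∈ V₀.dualAnnihilator, trace K V (X ∘ₗ ψ.smulRight w) = 0) :
    W₀ ≤ V₀.comap X := by
  intro w hw
  rw [Submodule.mem_comap, ← Subspace.forall_mem_dualAnnihilator_apply_eq_zero_iff]
  intro ψ hψ
  have hcomp : X ∘ₗ ψ.smulRight w = ψ.smulRight (X w) := by ext; simp
  simpa [hcomp] using h w hw ψ hψ

lemma exists_trace_comp_eq [FiniteDimensional K V] {C : V →ₗ[K] W} (hC : C ≠ 0) (c : K) :
    ∃ X : W →ₗ[K] V, trace K V (X ∘ₗ C) = c := by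
  obtain ⟨v, hv⟩ : ∃ v, C v ≠ 0 := by
    by_contra! h
    exact hC (LinearMap.ext h)
  obtain ⟨φ, hφ⟩ := Projective.exists_dual_eq_one K hv
  refine ⟨(c • φ).smulRight v, ?_⟩
  have hcomp : (c • φ).smulRight v ∘ₗ C = ((c • φ) ∘ₗ C).smulRight v := by ext; simp
  simp [hcomp, hφ]

lemma trace_comp_eq_trace_comp_of_eqOn_range [FiniteDimensional K V] [FiniteDimensional K W]
    {X : W →ₗ[K] V} {A B : V →ₗ[K] W} (h : Set.EqOn A B (range X)) :
    trace K V (X ∘ₗ A) = trace K V (X ∘ₗ B) := by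
  have hcomp : A ∘ₗ X = B ∘ₗ X := LinearMap.ext fun w => h (mem_range_self X w)
  rw [trace_comp_comm' A X, trace_comp_comm' B X, hcomp]

end LinearAlgebra

section Fourier

variable {p s : ℕ} [Fact p.Prime] {V W : Type*}
    [AddCommGroup V] [Module (GaloisField p s) V] [AddCommGroup W] [Module (GaloisField p s) W]

local notation "𝔽" => GaloisField p s
local notation "τ" => Algebra.trace (ZMod p) (GaloisField p s)

lemma uX_eq_stdAddChar (X : W →ₗ[𝔽] V) (A : V →ₗ[𝔽] W) :
    uX p s X A = ZMod.stdAddChar (τ (trace 𝔽 V (X ∘ₗ A))) :=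
  ee_eq_stdAddChar (p := p) _

lemma uX_add (X : W →ₗ[𝔽] V) (A B : V →ₗ[𝔽] W) :
    uX p s X (A + B) = uX p s X A * uX p s X B := by
  simp only [uX_eq_stdAddChar, comp_add, map_add, AddChar.map_add_eq_mul]

lemma uX_zero (X : W →ₗ[𝔽] V) : uX p s X 0 = 1 := by
  simp only [uX_eq_stdAddChar, comp_zero, map_zero, AddChar.map_zero_eq_one]

lemma conj_uX (X : W →ₗ[𝔽] V) (A : V →ₗ[𝔽] W) :
    starRingEnd ℂ (uX p s X A) = uX p s X (-A) := by
  simp only [uX_eq_stdAddChar, comp_neg, map_neg, AddChar.map_neg_eq_conj]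

lemma uX_eq_one_iff {X : W →ₗ[𝔽] V} {A : V →ₗ[𝔽] W} :
    uX p s X A = 1 ↔ τ (trace 𝔽 V (X ∘ₗ A)) = 0 := by
  rw [uX_eq_stdAddChar, ← AddChar.map_zero_eq_one (ZMod.stdAddChar (N := p)),
    ZMod.injective_stdAddChar.eq_iff]

lemma sum_uX_eq_zero [FiniteDimensional 𝔽 V] [Fintype (W →ₗ[𝔽] V)] {C : V →ₗ[𝔽] W}
    (hC : C ≠ 0) : ∑ X : W →ₗ[𝔽] V, uX p s X C = 0 := by
  let ψ : AddChar (W →ₗ[𝔽] V) ℂ := ZMod.stdAddChar.compAddMonoidHom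
    ((τ).toAddMonoidHom.comp ((trace 𝔽 V).toAddMonoidHom.comp (lcomp 𝔽 V C).toAddMonoidHom))
  have hψ : ∀ X, uX p s X C = ψ X := fun X => uX_eq_stdAddChar X C
  simp only [hψ]
  refine AddChar.sum_eq_zero_of_ne_one (AddChar.ne_one_iff.2 ?_)
  obtain ⟨b, hb⟩ := exists_algebraTrace_mul_ne_zero (K := ZMod p) (one_ne_zero : (1 : 𝔽) ≠ 0)
  obtain ⟨X, hX⟩ := exists_trace_comp_eq hC b
  refine ⟨X, fun h => hb ?_⟩
  rw [← hψ, uX_eq_one_iff, hX] at h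
  rwa [one_mul]

lemma natCard_linearMap_comm [FiniteDimensional 𝔽 V] [FiniteDimensional 𝔽 W] :
    Nat.card (V →ₗ[𝔽] W) = Nat.card (W →ₗ[𝔽] V) := by
  rw [natCard_eq_pow_finrank (K := 𝔽) (V := V →ₗ[𝔽] W),
    natCard_eq_pow_finrank (K := 𝔽) (V := W →ₗ[𝔽] V),
    finrank_linearMap, finrank_linearMap, mul_comm]

lemma fhatB_eq_sum [Fintype (V →ₗ[𝔽] W)] (f : (V →ₗ[𝔽] W) → ℂ) (X : W →ₗ[𝔽] V) :
    fhatB p s f X =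
      (∑ A, f A * starRingEnd ℂ (uX p s X A)) / Fintype.card (V →ₗ[𝔽] W) := by
  rw [fhatB, finsum_eq_sum_of_fintype, Nat.card_eq_fintype_card]

lemma fhatB_sum [Fintype (V →ₗ[𝔽] W)] {ι : Type*} (t : Finset ι)
    (g : ι → (V →ₗ[𝔽] W) → ℂ) (X : W →ₗ[𝔽] V) :
    fhatB p s (fun A => ∑ j ∈ t, g j A) X = ∑ j ∈ t, fhatB p s (g j) X := by
  simp only [fhatB_eq_sum, Finset.sum_mul, ← Finset.sum_div]
  rw [Finset.sum_comm]

theorem fhatB_inversion [FiniteDimensional 𝔽 V] [FiniteDimensional 𝔽 W]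
    [Fintype (V →ₗ[𝔽] W)] [Fintype (W →ₗ[𝔽] V)] (f : (V →ₗ[𝔽] W) → ℂ) (A : V →ₗ[𝔽] W) :
    f A = ∑ X : W →ₗ[𝔽] V, fhatB p s f X * uX p s X A := by
  have hterm : ∀ X : W →ₗ[𝔽] V, fhatB p s f X * uX p s X A =
      (∑ B, f B * uX p s X (A - B)) / Fintype.card (V →ₗ[𝔽] W) := by
    intro X
    rw [fhatB_eq_sum, div_mul_eq_mul_div, Finset.sum_mul]
    congr 1
    refine Finset.sum_congr rfl fun B _ => ?_
    rw [conj_uX, mul_assoc, ← uX_add, neg_add_eq_sub]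
  have hcard : (Fintype.card (V →ₗ[𝔽] W) : ℂ) ≠ 0 := Nat.cast_ne_zero.2 Fintype.card_ne_zero
  have hdiag : ∑ B, f B * ∑ X : W →ₗ[𝔽] V, uX p s X (A - B) =
      f A * Fintype.card (W →ₗ[𝔽] V) := by
    rw [Finset.sum_eq_single A (fun B _ hB => by rw [sum_uX_eq_zero (sub_ne_zero.2 hB.symm),
      mul_zero]) (by simp)]
    simp [uX_zero]
  rw [Finset.sum_congr rfl fun X _ => hterm X, ← Finset.sum_div, Finset.sum_comm]
  simp only [← Finset.mul_sum]
  rw [hdiag, ← Nat.card_eq_fintype_card, ← natCard_linearMap_comm, Nat.card_eq_fintype_card,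
    mul_div_cancel_right₀ _ hcard]

lemma uX_eq_one_of_fhatB_ne_zero [Fintype (V →ₗ[𝔽] W)] {g : (V →ₗ[𝔽] W) → ℂ}
    {X : W →ₗ[𝔽] V} (hX : fhatB p s g X ≠ 0) {Δ : V →ₗ[𝔽] W} (hΔ : ∀ A, g (A + Δ) = g A) :
    uX p s X Δ = 1 := by
  rw [fhatB_eq_sum] at hX
  set T := ∑ A, g A * starRingEnd ℂ (uX p s X A)
  have hT : T ≠ 0 := left_ne_zero_of_mul hX
  -- translating the summation variable by `Δ`
  have hshift : starRingEnd ℂ (uX p s X Δ) * T = 1 * T :=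
    calc starRingEnd ℂ (uX p s X Δ) * T
        = ∑ A, g (A + Δ) * starRingEnd ℂ (uX p s X (A + Δ)) := by
          rw [Finset.mul_sum]
          refine Finset.sum_congr rfl fun A _ => ?_
          rw [hΔ, uX_add, map_mul]
          ring
      _ = 1 * T := by rw [one_mul]; exact Fintype.sum_equiv (Equiv.addRight Δ) _ _ fun A => rfl
  simpa using congrArg (starRingEnd ℂ) (mul_right_cancel₀ hT hshift)

lemma trace_comp_eq_zero_of_forall_uX_smul_eq_one {X : W →ₗ[𝔽] V} {Δ : V →ₗ[𝔽] W}
    (h : ∀ c : 𝔽, uX p s X (c • Δ) = 1) : trace 𝔽 V (X ∘ₗ Δ) = 0 := by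
  by_contra ha
  obtain ⟨c, hc⟩ := exists_algebraTrace_mul_ne_zero (K := ZMod p) ha
  apply hc
  rw [mul_comm, ← smul_eq_mul, ← map_smul, ← comp_smul, ← uX_eq_one_iff]
  exact h c

theorem IsJuntaOn.finrank_range_le_of_fhatB_ne_zero [FiniteDimensional 𝔽 V]
    [FiniteDimensional 𝔽 W] [Fintype (V →ₗ[𝔽] W)] {ι κ : Type*} [Fintype ι] [Fintype κ]
    {v : ι → V} {u : κ → Dual 𝔽 W} {g : (V →ₗ[𝔽] W) → ℂ} (hg : IsJuntaOn v u g)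
    {X : W →ₗ[𝔽] V} (hX : fhatB p s g X ≠ 0) :
    finrank 𝔽 (range X) ≤ Fintype.card ι + Fintype.card κ := by
  set V₀ := Submodule.span 𝔽 (Set.range v)
  set W₀ := ⨅ l, ker (u l)
  have hmaps : W₀ ≤ V₀.comap X := by
    refine le_comap_of_trace_comp_smulRight_eq_zero fun w hw ψ hψ => ?_
    refine trace_comp_eq_zero_of_forall_uX_smul_eq_one fun c =>
      uX_eq_one_of_fhatB_ne_zero hX (hg.apply_add_eq (fun l => ?_) (fun l => ?_))
    · have hψv : ψ (v l) = 0 :=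
        (Submodule.mem_dualAnnihilator ψ).1 hψ _ (Submodule.subset_span ⟨l, rfl⟩)
      simp [hψv]
    · have hw : u l w = 0 := (Submodule.mem_iInf _).1 hw l
      ext x
      simp [hw]
  have hrange := finrank_range_add_finrank_le_of_le_comap hmaps
  have hcodim : finrank 𝔽 W ≤ finrank 𝔽 W₀ + Fintype.card κ :=
    finrank_le_finrank_iInf_ker_add_card u
  have hspan : finrank 𝔽 V₀ ≤ Fintype.card ι := finrank_range_le_card v
  omega

lemma isJuntaOn_const_mul_uX [FiniteDimensional 𝔽 V] [FiniteDimensional 𝔽 W] {ι κ : Type*}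
    (X : W →ₗ[𝔽] V) (b : Basis ι 𝔽 (range X)) (u : κ → Dual 𝔽 W) (c : ℂ) :
    IsJuntaOn (fun l => (b l : V)) u fun A => c * uX p s X A := by
  intro A B hAB _
  have hsub : A ∘ₗ (range X).subtype = B ∘ₗ (range X).subtype := b.ext hAB
  have hrange : Set.EqOn A B (range X) := fun x hx => LinearMap.congr_fun hsub ⟨x, hx⟩
  simp only [uX, trace_comp_eq_trace_comp_of_eqOn_range hrange]

end Fourier

theorem stmt9_general (p s : ℕ) [Fact p.Prime]
    (V W : Type) [AddCommGroup V] [Module (GaloisField p s) V] [Finite V]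
    [AddCommGroup W] [Module (GaloisField p s) W] [Finite W]
    (f : (V →ₗ[GaloisField p s] W) → ℂ) (d : ℕ) :
    (∃ (k : ℕ) (g : Fin k → ((V →ₗ[GaloisField p s] W) → ℂ)),
      (∀ j, ∃ (i : ℕ) (_ : i ≤ d) (vv : Fin i → V)
          (uu : Fin (d - i) → (W →ₗ[GaloisField p s] (GaloisField p s))),
        ∀ A B : V →ₗ[GaloisField p s] W,
          (∀ l, A (vv l) = B (vv l)) → (∀ l, uu l ∘ₗ A = uu l ∘ₗ B) → g j A = g j B) ∧
      f = fun A => ∑ j, g j A)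
    ↔ (∀ X : W →ₗ[GaloisField p s] V, fhatB p s f X ≠ 0 →
        Module.finrank (GaloisField p s) (LinearMap.range X) ≤ d) := by
  have := Fintype.ofFinite (V →ₗ[GaloisField p s] W)
  have := Fintype.ofFinite (W →ₗ[GaloisField p s] V)
  constructor
  · rintro ⟨k, g, hg, rfl⟩ X hX
    rw [fhatB_sum] at hX
    obtain ⟨j, -, hj⟩ := Finset.exists_ne_zero_of_sum_ne_zero hX
    obtain ⟨i, hi, v, u, hgj⟩ := hg j
    have hrank := IsJuntaOn.finrank_range_le_of_fhatB_ne_zero hgj hj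
    simp only [Fintype.card_fin] at hrank
    omega
  · intro h
    let e := (Fintype.equivFin (W →ₗ[GaloisField p s] V)).symm
    refine ⟨_, fun j A => fhatB p s f (e j) * uX p s (e j) A, fun j => ?_, ?_⟩
    · by_cases h0 : fhatB p s f (e j) = 0
      · exact ⟨0, d.zero_le, Fin.elim0, fun _ => 0, fun A B _ _ => by simp [h0]⟩
      · exact ⟨_, h _ h0, _, fun _ => 0,
          isJuntaOn_const_mul_uX (e j) (finBasis (GaloisField p s) (range (e j))) _ _⟩
    · funext A
      rw [fhatB_inversion f A]
      exact (e.sum_comp _).symm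

/-- the junta-degree of `f : L(V,W) → ℂ` equals its Fourier-degree. -/
theorem stmt9 (p s : ℕ) [Fact p.Prime] (hs : s ≠ 0)
    (V W : Type) [AddCommGroup V] [Module (GaloisField p s) V] [Finite V]
    [AddCommGroup W] [Module (GaloisField p s) W] [Finite W]
    (f : (V →ₗ[GaloisField p s] W) → ℂ) (d : ℕ) :
    (∃ (k : ℕ) (g : Fin k → ((V →ₗ[GaloisField p s] W) → ℂ)),
      (∀ j, ∃ (i : ℕ) (_ : i ≤ d) (vv : Fin i → V)
          (uu : Fin (d - i) → (W →ₗ[GaloisField p s] (GaloisField p s))),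
        ∀ A B : V →ₗ[GaloisField p s] W,
          (∀ l, A (vv l) = B (vv l)) → (∀ l, uu l ∘ₗ A = uu l ∘ₗ B) → g j A = g j B) ∧
      f = fun A => ∑ j, g j A)
    ↔ (∀ X : W →ₗ[GaloisField p s] V, fhatB p s f X ≠ 0 →
        Module.finrank (GaloisField p s) (LinearMap.range X) ≤ d) :=
  stmt9_general p s V W f d
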